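/- arXiv:1001.1804 — 2 statements merged into one kernel-verified Lean document; each statement's English description precedes it below -/
import Mathlib

section
/- Let ε^{n+1}, ε^n : V → ℝ be functions on a finite nonempty vertex set V, and suppose that for each vertex i there exist nonnegative weights w_{ij} ≥ 0 (j ranging over V) such that ε^{n+1}(i)·(1 + Σ_j w_{ij}) = ε^n(i) + Σ_j w_{ij}·ε^{n+1}(j). Then max_{i∈V} |ε^{n+1}(i)| ≤ max_{i∈V} |ε^n(i)|. -/
/-!
Take a vertex `i` where `|εⁿ⁺¹|` is maximal, with value `M`. The right-hand side of the `i`-th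
equation is at most `|εⁿ(i)| + (∑ⱼ wᵢⱼ) M` in absolute value because the weights are nonnegative,
while the left-hand side has absolute value `M (1 + ∑ⱼ wᵢⱼ)`; cancelling `(∑ⱼ wᵢⱼ) M` leaves
`M ≤ |εⁿ(i)|`.
-/

open Finset

lemma abs_sum_mul_le_sum_mul {ι : Type*} (s : Finset ι) {w y : ι → ℝ} {M : ℝ}
    (hw : ∀ j ∈ s, 0 ≤ w j) (hy : ∀ j ∈ s, |y j| ≤ M) :
    |∑ j ∈ s, w j * y j| ≤ (∑ j ∈ s, w j) * M := by
  calc |∑ j ∈ s, w j * y j| ≤ ∑ j ∈ s, |w j * y j| := abs_sum_le_sum_abs _ _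
    _ ≤ ∑ j ∈ s, w j * M := sum_le_sum fun j hj => by
        rw [abs_mul, abs_of_nonneg (hw j hj)]
        exact mul_le_mul_of_nonneg_left (hy j hj) (hw j hj)
    _ = (∑ j ∈ s, w j) * M := (sum_mul _ _ _).symm

lemma abs_le_of_mul_one_add_sum_eq {ι : Type*} (s : Finset ι) {w y : ι → ℝ} {x b : ℝ}
    (hw : ∀ j ∈ s, 0 ≤ w j) (hy : ∀ j ∈ s, |y j| ≤ |x|)
    (h : x * (1 + ∑ j ∈ s, w j) = b + ∑ j ∈ s, w j * y j) :
    |x| ≤ |b| := by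
  have hS : 0 ≤ ∑ j ∈ s, w j := sum_nonneg hw
  have key : |x| * (1 + ∑ j ∈ s, w j) ≤ |b| + (∑ j ∈ s, w j) * |x| :=
    calc |x| * (1 + ∑ j ∈ s, w j) = |x * (1 + ∑ j ∈ s, w j)| := by
          rw [abs_mul, abs_of_nonneg (by linarith : 0 ≤ 1 + ∑ j ∈ s, w j)]
      _ = |b + ∑ j ∈ s, w j * y j| := by rw [h]
      _ ≤ |b| + |∑ j ∈ s, w j * y j| := abs_add_le _ _
      _ ≤ |b| + (∑ j ∈ s, w j) * |x| := by gcongr; exact abs_sum_mul_le_sum_mul s hw hy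
  linarith

theorem implicit_scheme_stable {V : Type*} [Fintype V] [Nonempty V]
    (εn εn1 : V → ℝ) (w : V → V → ℝ) (hw : ∀ i j, 0 ≤ w i j)
    (h : ∀ i, εn1 i * (1 + ∑ j, w i j) = εn i + ∑ j, w i j * εn1 j) :
    (Finset.univ.sup' Finset.univ_nonempty fun i => |εn1 i|) ≤
      Finset.univ.sup' Finset.univ_nonempty fun i => |εn i| := by
  obtain ⟨i, -, hi⟩ := exists_mem_eq_sup' univ_nonempty fun i => |εn1 i|
  have hmax : ∀ j ∈ univ, |εn1 j| ≤ |εn1 i| := fun j hj => hi ▸ le_sup' (fun i => |εn1 i|) hj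
  rw [hi]
  exact (abs_le_of_mul_one_add_sum_eq univ (fun j _ => hw i j) hmax (h i)).trans
    (le_sup' (fun i => |εn i|) (mem_univ i))
end

section
/- Let V be a finite nonempty set, w_{ij} ≥ 0, and let ψ satisfy the implicit relation ψ^{n+1}(i)·(1 + Σ_j w_{ij}) = ψ^n(i) + Σ_j w_{ij} ψ^{n+1}(j). If ψ^n(i) ≥ 0 for all i, then ψ^{n+1}(i) ≥ 0 for all i. -/
theorem implicit_scheme_positivity {V : Type*} [Fintype V] [Nonempty V]
    (w : V → V → ℝ) (hw : ∀ i j, 0 ≤ w i j)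
    (ψn ψn1 : V → ℝ)
    (h : ∀ i, ψn1 i * (1 + ∑ j, w i j) = ψn i + ∑ j, w i j * ψn1 j)
    (hpos : ∀ i, 0 ≤ ψn i) :
    ∀ i, 0 ≤ ψn1 i := by
  obtain ⟨i₀, hi₀⟩ := Finset.exists_min_image Finset.univ ψn1 ⟨Classical.arbitrary V, Finset.mem_univ _⟩
  have hmin : ∀ j, ψn1 i₀ ≤ ψn1 j := fun j => hi₀.2 j (Finset.mem_univ j)
  have key : 0 ≤ ψn1 i₀ := by
    have heq := h i₀
    have hsum : ∑ j, w i₀ j * ψn1 i₀ ≤ ∑ j, w i₀ j * ψn1 j :=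
      Finset.sum_le_sum fun j _ => mul_le_mul_of_nonneg_left (hmin j) (hw i₀ j)
    have : ψn i₀ + ∑ j, w i₀ j * ψn1 i₀ ≤ ψn1 i₀ * (1 + ∑ j, w i₀ j) := by
      rw [heq]; linarith
    have h2 : ∑ j, w i₀ j * ψn1 i₀ = (∑ j, w i₀ j) * ψn1 i₀ := by
      rw [Finset.sum_mul]
    nlinarith [hpos i₀]
  exact fun i => le_trans key (hmin i)
end
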